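/- arXiv:1309.3660 — 3 statements merged into one kernel-verified Lean document; each statement's English description precedes it below -/
import Mathlib

section
/- Under the assumptions that W is a nonnegative row-stochastic matrix with a strictly positive column, Q is row-stochastic with Q i i = 0, and Δ is diagonal with 0 ≤ δ_i < 1 for all i, the matrix M = D + (W − D)·(I − ΔQ)^{-1}·(I − Δ) is nonnegative and has a strictly positive column (the same column index as W's positive column). -/
/-!
Since `ΔQ` is nonnegative with row sums `δ_i < 1`, its `ℓ^∞` operator norm is `< 1`, so
`(1 - ΔQ)⁻¹ = ∑ₘ (ΔQ)^m` is entrywise nonnegative with diagonal entries at least `1`.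
As `W - D` is `W` with its diagonal removed, every term of `M` is nonnegative, and `M i j`
picks up `W j j > 0` from `D` when `i = j` and `W i j · (1 - ΔQ)⁻¹ j j · (1 - δ j) > 0`
otherwise.
-/

open Matrix
open scoped Matrix.Norms.Operator

namespace Matrix

lemma mul_apply_nonneg {ι R : Type*} [Fintype ι] [Semiring R] [PartialOrder R]
    [IsOrderedRing R] {A B : Matrix ι ι R} (hA : ∀ i k, 0 ≤ A i k) (hB : ∀ i k, 0 ≤ B i k)
    (i k : ι) : 0 ≤ (A * B) i k :=
  Finset.sum_nonneg fun l _ => mul_nonneg (hA i l) (hB l k)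

lemma mul_apply_pos {ι R : Type*} [Fintype ι] [Semiring R] [PartialOrder R]
    [IsStrictOrderedRing R] {A B : Matrix ι ι R} (hA : ∀ i k, 0 ≤ A i k)
    (hB : ∀ i k, 0 ≤ B i k) {i l k : ι} (hAil : 0 < A i l) (hBlk : 0 < B l k) :
    0 < (A * B) i k :=
  Finset.sum_pos' (fun m _ => mul_nonneg (hA i m) (hB m k))
    ⟨l, Finset.mem_univ l, mul_pos hAil hBlk⟩

variable {ι : Type*} [Fintype ι] [DecidableEq ι] {B : Matrix ι ι ℝ}

lemma linfty_opNorm_lt_one_of_sum_row_lt_one (hB : ∀ i k, 0 ≤ B i k)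
    (hrow : ∀ i, ∑ k, B i k < 1) : ‖B‖ < 1 := by
  rw [linfty_opNorm_def, ← NNReal.coe_one, NNReal.coe_lt_coe,
    Finset.sup_lt_iff zero_lt_one]
  intro i _
  rw [← NNReal.coe_lt_coe, NNReal.coe_sum]
  simpa [Real.norm_of_nonneg (hB i _)] using hrow i

lemma hasSum_pow_apply_inv_one_sub (hB : ‖B‖ < 1) (i k : ι) :
    HasSum (fun m : ℕ => (B ^ m) i k) ((1 - B)⁻¹ i k) := by
  rw [nonsing_inv_eq_ringInverse]
  exact Pi.hasSum.1 (Pi.hasSum.1 (hasSum_geom_series_inverse B hB) i) k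

lemma inv_one_sub_apply_nonneg (hB : ∀ i k, 0 ≤ B i k) (hrow : ∀ i, ∑ k, B i k < 1)
    (i k : ι) : 0 ≤ (1 - B)⁻¹ i k :=
  (hasSum_pow_apply_inv_one_sub (linfty_opNorm_lt_one_of_sum_row_lt_one hB hrow) i k).nonneg
    fun m => pow_apply_nonneg hB m i k

lemma one_le_inv_one_sub_apply_self (hB : ∀ i k, 0 ≤ B i k) (hrow : ∀ i, ∑ k, B i k < 1)
    (i : ι) : 1 ≤ (1 - B)⁻¹ i i := by
  simpa using
    le_hasSum (hasSum_pow_apply_inv_one_sub (linfty_opNorm_lt_one_of_sum_row_lt_one hB hrow) i i) 0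
      fun m _ => pow_apply_nonneg hB m i i

lemma sub_diagonal_diag_apply {ι R : Type*} [DecidableEq ι] [AddGroup R] (W : Matrix ι ι R)
    (i k : ι) : (W - diagonal fun i => W i i) i k = if i = k then 0 else W i k := by
  by_cases h : i = k
  · subst h; simp
  · simp [h]

end Matrix

theorem stmt_7_general (n : ℕ) (W Q : Matrix (Fin n) (Fin n) ℝ)
    (hWnonneg : ∀ i j, 0 ≤ W i j)
    (j : Fin n) (hWcol : ∀ i, 0 < W i j)
    (hQnonneg : ∀ i j, 0 ≤ Q i j) (hQrow : ∀ i, ∑ j, Q i j = 1)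
    (δ : Fin n → ℝ) (hδ0 : ∀ i, 0 ≤ δ i) (hδ1 : ∀ i, δ i < 1)
    (D : Matrix (Fin n) (Fin n) ℝ) (hD : D = Matrix.diagonal (fun i => W i i))
    (M : Matrix (Fin n) (Fin n) ℝ)
    (hM : M = D + (W - D) * (1 - Matrix.diagonal δ * Q)⁻¹ * (1 - Matrix.diagonal δ)) :
    (∀ i j', 0 ≤ M i j') ∧ (∀ i, 0 < M i j) := by
  have hB : ∀ i k, 0 ≤ (diagonal δ * Q) i k := fun i k => by
    simpa [diagonal_mul] using mul_nonneg (hδ0 i) (hQnonneg i k)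
  have hrow : ∀ i, ∑ k, (diagonal δ * Q) i k < 1 := fun i => by
    simpa [diagonal_mul, ← Finset.mul_sum, hQrow] using hδ1 i
  set N := (1 - diagonal δ * Q)⁻¹
  have hN := inv_one_sub_apply_nonneg hB hrow
  have hA : ∀ i k, 0 ≤ (W - D) i k := fun i k => by
    rw [hD, sub_diagonal_diag_apply]; split_ifs <;> simp [hWnonneg]
  have hM_apply : ∀ i k, M i k = D i k + ((W - D) * N) i k * (1 - δ k) := fun i k => by
    have : (1 : Matrix (Fin n) (Fin n) ℝ) - diagonal δ = diagonal fun k => 1 - δ k := by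
      rw [← diagonal_one, diagonal_sub]
    rw [hM, this, Matrix.add_apply, mul_diagonal]
  have hD_nonneg : ∀ i k, 0 ≤ D i k := fun i k => by
    rw [hD, diagonal_apply]; split_ifs <;> simp [hWnonneg]
  have hδ1_pos : ∀ k, 0 < 1 - δ k := fun k => sub_pos.2 (hδ1 k)
  have hsecond : ∀ i k, 0 ≤ ((W - D) * N) i k * (1 - δ k) := fun i k =>
    mul_nonneg (mul_apply_nonneg hA hN i k) (hδ1_pos k).le
  refine ⟨fun i k => hM_apply i k ▸ add_nonneg (hD_nonneg i k) (hsecond i k), fun i => ?_⟩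
  rw [hM_apply]
  by_cases hij : i = j
  · subst hij
    exact add_pos_of_pos_of_nonneg (by simpa [hD] using hWcol i) (hsecond i i)
  · have hWD : 0 < (W - D) i j := by simpa [hD, sub_diagonal_diag_apply, hij] using hWcol i
    have hNjj : 0 < N j j := one_pos.trans_le (one_le_inv_one_sub_apply_self hB hrow j)
    exact add_pos_of_nonneg_of_pos (hD_nonneg i j)
      (mul_pos (mul_apply_pos hA hN hWD hNjj) (hδ1_pos j))

theorem stmt_7 (n : ℕ) (W Q : Matrix (Fin n) (Fin n) ℝ)
    (hWnonneg : ∀ i j, 0 ≤ W i j) (hWrow : ∀ i, ∑ j, W i j = 1)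
    (j : Fin n) (hWcol : ∀ i, 0 < W i j)
    (hQnonneg : ∀ i j, 0 ≤ Q i j) (hQrow : ∀ i, ∑ j, Q i j = 1)
    (hQdiag : ∀ i, Q i i = 0)
    (δ : Fin n → ℝ) (hδ0 : ∀ i, 0 ≤ δ i) (hδ1 : ∀ i, δ i < 1)
    (D : Matrix (Fin n) (Fin n) ℝ) (hD : D = Matrix.diagonal (fun i => W i i))
    (M : Matrix (Fin n) (Fin n) ℝ)
    (hM : M = D + (W - D) * (1 - Matrix.diagonal δ * Q)⁻¹ * (1 - Matrix.diagonal δ)) :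
    (∀ i j', 0 ≤ M i j') ∧ (∀ i, 0 < M i j) :=
  stmt_7_general n W Q hWnonneg j hWcol hQnonneg hQrow δ hδ0 hδ1 D hD M hM
end

section
/- If Q is a row-stochastic n×n matrix with strictly positive off-diagonal entries and zero diagonal, Δ is diagonal with 0 < δ_i < 1 for all i, and the row-stochastic nonnegative matrix W has at least two strictly positive columns, then M = D + (W − D)·(I − ΔQ)^{-1}·(I − Δ) is strictly positive in every entry. -/
/-!
Write `A = Δ Q`: it is entrywise nonnegative with row sums `δ i < 1`, so `1 - A` is strictly
diagonally dominant and hence invertible. Its inverse `N` satisfies `N = 1 + A N`, and a minimum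
principle on each column shows `N ≥ 0`; then `N j j ≥ 1` and `N i j ≥ A i j N j j > 0`, so `N`,
and with it `N (1 - Δ)`, is entrywise positive. Finally `M = D + (W - D) N (1 - Δ)`, where
`D ≥ 0` and every row of `W - D ≥ 0` has a positive entry at whichever of `j₁`, `j₂` is off the
diagonal.
-/

open Matrix Finset

namespace Matrix

variable {ι : Type*} [Fintype ι] {A : Matrix ι ι ℝ}

/-- Minimum principle: on a column of `N` the minimum `N m j` satisfies
`N m j ≥ C m j + (∑ k, A m k) N m j`. -/
theorem nonneg_of_eq_add_mul (hA : ∀ i j, 0 ≤ A i j) (hrow : ∀ i, ∑ j, A i j < 1)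
    {N C : Matrix ι ι ℝ} (hC : ∀ i j, 0 ≤ C i j) (hN : N = C + A * N) (i j : ι) :
    0 ≤ N i j := by
  obtain ⟨m, -, hm⟩ := exists_min_image univ (fun k => N k j) ⟨i, mem_univ i⟩
  have hNm : N m j = C m j + ∑ k, A m k * N k j := by
    simpa only [add_apply, mul_apply] using congrFun (congrFun hN m) j
  have hlow : (∑ k, A m k) * N m j ≤ ∑ k, A m k * N k j := by
    rw [sum_mul]
    exact sum_le_sum fun k _ => mul_le_mul_of_nonneg_left (hm k (mem_univ k)) (hA m k)
  have hmin : 0 ≤ (1 - ∑ k, A m k) * N m j := by linarith [hC m j]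
  exact ((mul_nonneg_iff_of_pos_left (sub_pos.mpr (hrow m))).mp hmin).trans (hm i (mem_univ i))

variable [DecidableEq ι]

theorem det_one_sub_ne_zero_of_sum_row_lt_one (hA : ∀ i j, 0 ≤ A i j)
    (hrow : ∀ i, ∑ j, A i j < 1) : (1 - A).det ≠ 0 := by
  refine det_ne_zero_of_sum_row_lt_diag fun k => ?_
  have hoff : ∑ j ∈ univ.erase k, ‖(1 - A) k j‖ = ∑ j ∈ univ.erase k, A k j :=
    sum_congr rfl fun j hj => by
      rw [sub_apply, one_apply_ne' (ne_of_mem_erase hj), zero_sub, norm_neg,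
        Real.norm_of_nonneg (hA k j)]
  have hdiag : 1 - A k k ≤ ‖(1 - A) k k‖ := by
    rw [sub_apply, one_apply_eq]
    exact Real.le_norm_self _
  have hsplit := add_sum_erase univ (A k) (mem_univ k)
  linarith [hrow k]

theorem inv_one_sub_eq_one_add_mul (h : (1 - A).det ≠ 0) :
    (1 - A)⁻¹ = 1 + A * (1 - A)⁻¹ := by
  have hinv := mul_nonsing_inv (1 - A) (isUnit_iff_ne_zero.mpr h)
  rwa [sub_mul, one_mul, sub_eq_iff_eq_add] at hinv

theorem inv_one_sub_pos (hA : ∀ i j, 0 ≤ A i j) (hrow : ∀ i, ∑ j, A i j < 1)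
    (hoff : ∀ i j, i ≠ j → 0 < A i j) (i j : ι) : 0 < (1 - A)⁻¹ i j := by
  set N := (1 - A)⁻¹
  have hfix : N = 1 + A * N :=
    inv_one_sub_eq_one_add_mul (det_one_sub_ne_zero_of_sum_row_lt_one hA hrow)
  have hN : ∀ i j, 0 ≤ N i j :=
    nonneg_of_eq_add_mul hA hrow (fun i j => by rw [one_apply]; split_ifs <;> norm_num) hfix
  have hentry : ∀ i j, (1 : Matrix ι ι ℝ) i j + A i j * N j j ≤ N i j := by
    intro i j
    conv_rhs => rw [hfix, add_apply, mul_apply]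
    gcongr
    exact single_le_sum (f := fun k => A i k * N k j)
      (fun k _ => mul_nonneg (hA i k) (hN k j)) (mem_univ j)
  have hjj : 1 ≤ N j j := by
    have := hentry j j
    rw [one_apply_eq] at this
    linarith [mul_nonneg (hA j j) (hN j j)]
  rcases eq_or_ne i j with rfl | hij
  · linarith
  · have := hentry i j
    rw [one_apply_ne hij, zero_add] at this
    exact (mul_pos (hoff i j hij) (by linarith)).trans_le this

theorem inv_one_sub_diagonal_mul_mul_one_sub_diagonal_pos {Q : Matrix ι ι ℝ} {δ : ι → ℝ}
    (hQnonneg : ∀ i j, 0 ≤ Q i j) (hQrow : ∀ i, ∑ j, Q i j = 1)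
    (hQoff : ∀ i j, i ≠ j → 0 < Q i j) (hδ0 : ∀ i, 0 < δ i) (hδ1 : ∀ i, δ i < 1) (i j : ι) :
    0 < ((1 - diagonal δ * Q)⁻¹ * (1 - diagonal δ)) i j := by
  have hN := inv_one_sub_pos (A := diagonal δ * Q)
    (fun i j => by rw [diagonal_mul]; exact mul_nonneg (hδ0 i).le (hQnonneg i j))
    (fun i => by simp only [diagonal_mul, ← mul_sum, hQrow, mul_one, hδ1])
    (fun i j hij => by rw [diagonal_mul]; exact mul_pos (hδ0 i) (hQoff i j hij)) i j
  have hsub : (1 : Matrix ι ι ℝ) - diagonal δ = diagonal fun k => 1 - δ k := by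
    rw [← diagonal_one, diagonal_sub]
  rw [hsub, mul_diagonal]
  exact mul_pos hN (sub_pos.mpr (hδ1 j))

end Matrix

theorem Matrix.mul_apply_pos_s8 {l m n α : Type*} [Fintype m] [Semiring α] [PartialOrder α]
    [IsStrictOrderedRing α] {B : Matrix l m α} {P : Matrix m n α} {i : l} {k : m} (hB : ∀ k, 0 ≤ B i k) (hk : 0 < B i k)
    (hP : ∀ k j, 0 < P k j) (j : n) : 0 < (B * P) i j :=
  sum_pos' (fun k _ => mul_nonneg (hB k) (hP k j).le) ⟨k, mem_univ k, mul_pos hk (hP k j)⟩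

theorem Matrix.sub_diagonal_diag_apply_s8 {ι α : Type*} [DecidableEq ι] [AddGroup α]
    (W : Matrix ι ι α) (i k : ι) :
    (W - diagonal fun i => W i i) i k = if i = k then 0 else W i k := by
  rcases eq_or_ne i k with rfl | hik
  · simp
  · simp [hik]

theorem stmt_8_general (n : ℕ) (W Q : Matrix (Fin n) (Fin n) ℝ)
    (hWnonneg : ∀ i j, 0 ≤ W i j)
    (j₁ j₂ : Fin n) (hjj : j₁ ≠ j₂)
    (hWcol₁ : ∀ i, 0 < W i j₁) (hWcol₂ : ∀ i, 0 < W i j₂)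
    (hQnonneg : ∀ i j, 0 ≤ Q i j) (hQrow : ∀ i, ∑ j, Q i j = 1)
    (hQoff : ∀ i j, i ≠ j → 0 < Q i j)
    (δ : Fin n → ℝ) (hδ0 : ∀ i, 0 < δ i) (hδ1 : ∀ i, δ i < 1)
    (D : Matrix (Fin n) (Fin n) ℝ) (hD : D = Matrix.diagonal (fun i => W i i))
    (M : Matrix (Fin n) (Fin n) ℝ)
    (hM : M = D + (W - D) * (1 - Matrix.diagonal δ * Q)⁻¹ * (1 - Matrix.diagonal δ)) :
    ∀ i j, 0 < M i j := by
  intro i j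
  subst hM hD
  obtain ⟨k, hki, hk⟩ : ∃ k, i ≠ k ∧ 0 < W i k := by
    rcases eq_or_ne i j₁ with rfl | h
    · exact ⟨j₂, hjj, hWcol₂ i⟩
    · exact ⟨j₁, h, hWcol₁ i⟩
  have hWD : ∀ k, 0 ≤ (W - diagonal fun i => W i i) i k := fun k => by
    rw [sub_diagonal_diag_apply_s8]; split_ifs
    exacts [le_rfl, hWnonneg i k]
  have hDij : 0 ≤ diagonal (fun i => W i i) i j := by
    rw [diagonal_apply]; split_ifs
    exacts [hWnonneg i i, le_rfl]
  rw [mul_assoc, Matrix.add_apply]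
  refine add_pos_of_nonneg_of_pos hDij (mul_apply_pos_s8 (k := k) hWD ?_
    (inv_one_sub_diagonal_mul_mul_one_sub_diagonal_pos hQnonneg hQrow hQoff hδ0 hδ1) j)
  rwa [sub_diagonal_diag_apply_s8, if_neg hki]

theorem stmt_8 (n : ℕ) (hn : 2 ≤ n) (W Q : Matrix (Fin n) (Fin n) ℝ)
    (hWnonneg : ∀ i j, 0 ≤ W i j) (hWrow : ∀ i, ∑ j, W i j = 1)
    (j₁ j₂ : Fin n) (hjj : j₁ ≠ j₂)
    (hWcol₁ : ∀ i, 0 < W i j₁) (hWcol₂ : ∀ i, 0 < W i j₂)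
    (hQnonneg : ∀ i j, 0 ≤ Q i j) (hQrow : ∀ i, ∑ j, Q i j = 1)
    (hQdiag : ∀ i, Q i i = 0) (hQoff : ∀ i j, i ≠ j → 0 < Q i j)
    (δ : Fin n → ℝ) (hδ0 : ∀ i, 0 < δ i) (hδ1 : ∀ i, δ i < 1)
    (D : Matrix (Fin n) (Fin n) ℝ) (hD : D = Matrix.diagonal (fun i => W i i))
    (M : Matrix (Fin n) (Fin n) ℝ)
    (hM : M = D + (W - D) * (1 - Matrix.diagonal δ * Q)⁻¹ * (1 - Matrix.diagonal δ)) :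
    ∀ i j, 0 < M i j :=
  stmt_8_general n W Q hWnonneg j₁ j₂ hjj hWcol₁ hWcol₂ hQnonneg hQrow hQoff δ hδ0 hδ1 D hD M hM
end

section
/- Let u_i(s) = −(1−δ_i)(s_i − b_i)² − δ_i(s_i − (Qs)_i)² for i = 1,…,n, where Q is row-stochastic with zero diagonal and |δ_i| < 1. Then the unique simultaneous solution of the first-order conditions (the Nash equilibrium of the game) is s* = (I − ΔQ)^{-1}(I − Δ)·b, where Δ = diag(δ_1,…,δ_n). -/
/-!
The first-order conditions say exactly that `(1 - Δ Q) s = (1 - Δ) b`. Row `i` of `1 - Δ Q` has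
diagonal entry `1` and off-diagonal entries of total absolute value `|δ i| * ∑ j, |Q i j| < 1`,
so the matrix is strictly diagonally dominant, hence invertible (Lévy–Desplanques), and the
system has the single solution `(1 - Δ Q)⁻¹ (1 - Δ) b`.
-/

open Matrix

namespace Matrix

variable {ι : Type*} [Fintype ι] [DecidableEq ι]

theorem mulVec_eq_iff_eq_nonsing_inv_mulVec {K : Type*} [Field K] {A : Matrix ι ι K}
    (hA : A.det ≠ 0) {s c : ι → K} : A *ᵥ s = c ↔ s = A⁻¹ *ᵥ c := by
  have hA : IsUnit A.det := hA.isUnit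
  constructor
  · rintro rfl
    rw [mulVec_mulVec, nonsing_inv_mul A hA, one_mulVec]
  · rintro rfl
    rw [mulVec_mulVec, mul_nonsing_inv A hA, one_mulVec]

theorem one_sub_diagonal_mul_mulVec_apply {R : Type*} [CommRing R] (δ : ι → R)
    (Q : Matrix ι ι R) (s : ι → R) (i : ι) :
    ((1 - diagonal δ * Q) *ᵥ s) i = s i - δ i * ∑ j, Q i j * s j := by
  rw [sub_mulVec, one_mulVec, ← mulVec_mulVec, Pi.sub_apply, mulVec_diagonal]
  rfl

theorem det_one_sub_diagonal_mul_ne_zero (δ : ι → ℝ) (hδ : ∀ i, |δ i| < 1)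
    (Q : Matrix ι ι ℝ) (hQdiag : ∀ i, Q i i = 0) (hQ : ∀ i, ∑ j, |Q i j| ≤ 1) :
    (1 - diagonal δ * Q).det ≠ 0 := by
  refine det_ne_zero_of_sum_row_lt_diag fun i => ?_
  have hentry : ∀ j, (1 - diagonal δ * Q) i j = (1 : Matrix ι ι ℝ) i j - δ i * Q i j := by
    intro j
    rw [sub_apply, diagonal_mul]
  have hdiag : ‖(1 - diagonal δ * Q) i i‖ = 1 := by
    rw [hentry, one_apply_eq, hQdiag, mul_zero, sub_zero, norm_one]
  calc ∑ j ∈ Finset.univ.erase i, ‖(1 - diagonal δ * Q) i j‖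
      = |δ i| * ∑ j ∈ Finset.univ.erase i, |Q i j| := by
        rw [Finset.mul_sum]
        refine Finset.sum_congr rfl fun j hj => ?_
        rw [hentry, one_apply_ne (Finset.ne_of_mem_erase hj).symm, zero_sub, norm_neg,
          Real.norm_eq_abs, abs_mul]
    _ ≤ |δ i| * ∑ j, |Q i j| :=
        mul_le_mul_of_nonneg_left
          (Finset.sum_le_sum_of_subset_of_nonneg (Finset.erase_subset _ _)
            fun j _ _ => abs_nonneg _) (abs_nonneg _)
    _ ≤ |δ i| := mul_le_of_le_one_right (abs_nonneg _) (hQ i)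
    _ < ‖(1 - diagonal δ * Q) i i‖ := hdiag ▸ hδ i

end Matrix

theorem stmt_10 (n : ℕ) (Q : Matrix (Fin n) (Fin n) ℝ)
    (hQnonneg : ∀ i j, 0 ≤ Q i j) (hQrow : ∀ i, ∑ j, Q i j = 1)
    (hQdiag : ∀ i, Q i i = 0)
    (δ : Fin n → ℝ) (hδ : ∀ i, |δ i| < 1)
    (b : Fin n → ℝ) (s : Fin n → ℝ) :
    (∀ i, (1 - δ i) * (s i - b i) + δ i * (s i - ∑ j, Q i j * s j) = 0) ↔
      s = ((1 - Matrix.diagonal δ * Q)⁻¹ * (1 - Matrix.diagonal δ)) *ᵥ b := by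
  have hQ : ∀ i, ∑ j, |Q i j| ≤ 1 := fun i => by
    simp only [abs_of_nonneg (hQnonneg i _), hQrow, le_refl]
  have hdet := det_one_sub_diagonal_mul_ne_zero δ hδ Q hQdiag hQ
  have hsystem : (∀ i, (1 - δ i) * (s i - b i) + δ i * (s i - ∑ j, Q i j * s j) = 0) ↔
      (1 - diagonal δ * Q) *ᵥ s = (1 - diagonal δ) *ᵥ b := by
    rw [funext_iff]
    refine forall_congr' fun i => ?_
    rw [one_sub_diagonal_mul_mulVec_apply, sub_mulVec, one_mulVec, Pi.sub_apply,
      mulVec_diagonal]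
    constructor <;> intro h <;> linarith
  rw [hsystem, mulVec_eq_iff_eq_nonsing_inv_mulVec hdet, mulVec_mulVec]
end
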